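/- arXiv:1709.03508 — 5 statements merged into one kernel-verified Lean document; each statement's English description precedes it below -/
import Mathlib

section
/- Let g(z) = Σ_α t_α z^α be a finite Laurent polynomial with real coefficients, and for N ≥ 1 decompose g = Σ_{i=0}^{N-1} g_i where g_i(z) = Σ_{n} t_{nN+i} z^{nN+i}. Let f be defined by f(z^N) = Π_{n=0}^{N-1} g(ζ^n z) where ζ = e^{2πi/N}. Then f is a well-defined Laurent polynomial in z^N, and the topological invariant of f equals the topological invariant of g, i.e., ω(f) = ω(g) where ω counts zeros minus pole order strictly inside the unit disk. -/
/-!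
Write `g z = a ∏ (z - r) / z ^ m` over the complex roots `r` of `p`. Evaluating
`X ^ N - z ^ N = ∏ᵢ (X - ζⁱ z)` at `r` gives `∏ᵢ (ζⁱ z - r) = ± (z ^ N - r ^ N)`, so
`∏ᵢ g (ζⁱ z) = ± a ^ N ∏ (w - r ^ N) / w ^ m` with `w = z ^ N`. Hence `f` is a Laurent polynomial
with the same pole order `m` whose zeros are the `N`-th powers of the zeros of `g`, and
`‖r ^ N‖ < 1 ↔ ‖r‖ < 1`. Its coefficients are real because the construction commutes with complex
conjugation, which fixes `p`; and since every `w ≠ 0` is some `z ^ N`, `f` is determined by the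
identity, which pins down `ω(f)`.
-/

open Complex Polynomial

section Blocking

variable {K : Type*} [Field K] {N : ℕ} {ζ : K}

theorem IsPrimitiveRoot.prod_pow_mul_sub (hζ : IsPrimitiveRoot ζ N) (hN : 0 < N) (z r : K) :
    ∏ i ∈ Finset.range N, (ζ ^ i * z - r) = (-1) ^ (N + 1) * (z ^ N - r ^ N) := by
  have h := congrArg (eval r) (X_pow_sub_C_eq_prod hζ hN (rfl : z ^ N = z ^ N))
  simp only [eval_sub, eval_pow, eval_X, eval_C, eval_prod] at h
  calc ∏ i ∈ Finset.range N, (ζ ^ i * z - r)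
      = ∏ i ∈ Finset.range N, (-1) * (r - ζ ^ i * z) := by simp only [neg_one_mul, neg_sub]
    _ = (-1) ^ N * (r ^ N - z ^ N) := by
      rw [Finset.prod_mul_distrib, Finset.prod_const, Finset.card_range, h]
    _ = (-1) ^ (N + 1) * (z ^ N - r ^ N) := by ring

noncomputable def blockPoly (N : ℕ) (P : K[X]) : K[X] :=
  C (P.leadingCoeff ^ N * (-1) ^ ((N + 1) * P.roots.card)) *
    (P.roots.map fun r => X - C (r ^ N)).prod

theorem eval_blockPoly (hζ : IsPrimitiveRoot ζ N) (hN : 0 < N) {P : K[X]} (hP : P.Splits)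
    (z : K) : (blockPoly N P).eval (z ^ N) = ∏ i ∈ Finset.range N, P.eval (ζ ^ i * z) := by
  simp only [hP.eval_eq_prod_roots, Finset.prod_mul_distrib, Finset.prod_const, Finset.card_range]
  rw [Finset.prod_eq_multiset_prod, Multiset.prod_map_prod_map]
  simp only [← Finset.prod_eq_multiset_prod, hζ.prod_pow_mul_sub hN, Multiset.prod_map_mul,
    Multiset.map_const', Multiset.prod_replicate, blockPoly, eval_mul, eval_C, eval_multiset_prod,
    Multiset.map_map, Function.comp_def, eval_sub, eval_X, eval_C, pow_mul]
  ring

theorem roots_blockPoly {P : K[X]} (hP : P ≠ 0) :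
    (blockPoly N P).roots = P.roots.map (· ^ N) := by
  rw [blockPoly, roots_C_mul, ← roots_multiset_prod_X_sub_C (P.roots.map (· ^ N)),
    Multiset.map_map]
  · rfl
  exact mul_ne_zero (pow_ne_zero _ (leadingCoeff_ne_zero.mpr hP)) (pow_ne_zero _ (by norm_num))

theorem map_blockPoly {L : Type*} [Field L] {P : K[X]} (hP : P.Splits) (f : K →+* L) :
    (blockPoly N P).map f = blockPoly N (P.map f) := by
  simp [blockPoly, hP.roots_map f, leadingCoeff_map_of_injective f.injective,
    Polynomial.map_multiset_prod, Multiset.map_map]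

theorem coeff_zero_blockPoly (hζ : IsPrimitiveRoot ζ N) (hN : 0 < N) {P : K[X]} (hP : P.Splits) :
    (blockPoly N P).coeff 0 = P.coeff 0 ^ N := by
  simpa [coeff_zero_eq_eval_zero, zero_pow hN.ne'] using eval_blockPoly hζ hN hP 0

theorem prod_eval_div_pow_eq_eval_blockPoly (hζ : IsPrimitiveRoot ζ N) (hN : 0 < N) {P : K[X]}
    (hP : P.Splits) (m : ℕ) (z : K) :
    ∏ i ∈ Finset.range N, P.eval (ζ ^ i * z) / (ζ ^ i * z) ^ m
      = (C ((-1) ^ ((N + 1) * m)) * blockPoly N P).eval (z ^ N) / (z ^ N) ^ m := by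
  have hprod : ∏ i ∈ Finset.range N, ζ ^ i * z = (-1) ^ (N + 1) * z ^ N := by
    simpa [zero_pow hN.ne'] using hζ.prod_pow_mul_sub hN z 0
  rw [Finset.prod_div_distrib, Finset.prod_pow, hprod, ← eval_blockPoly hζ hN hP, eval_mul,
    eval_C, mul_pow, ← pow_mul]
  rcases neg_one_pow_eq_or K ((N + 1) * m) with h | h <;> rw [h] <;> ring

end Blocking

theorem Multiset.card_filter_norm_lt_one_map_pow {𝕜 : Type*} [NormedDivisionRing 𝕜]
    (s : Multiset 𝕜) {N : ℕ} (hN : N ≠ 0) :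
    ((s.map (· ^ N)).filter fun z => ‖z‖ < 1).card = (s.filter fun z => ‖z‖ < 1).card := by
  rw [Multiset.filter_map, Multiset.card_map]
  congr 1
  refine Multiset.filter_congr fun z _ => ?_
  simp only [Function.comp_apply, norm_pow, pow_lt_one_iff_of_nonneg (norm_nonneg z) hN]

theorem Polynomial.exists_map_ofReal_eq_of_map_conj_eq {G : ℂ[X]}
    (hG : G.map (starRingEnd ℂ) = G) :
    ∃ q : ℝ[X], q.map (algebraMap ℝ ℂ) = G := by
  refine (lifts_iff_coeff_lifts G).mpr fun n => ?_
  have hn : starRingEnd ℂ (G.coeff n) = G.coeff n := by rw [← coeff_map, hG]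
  obtain ⟨r, hr⟩ := Complex.conj_eq_iff_real.mp hn
  exact ⟨r, hr.symm⟩

theorem Polynomial.map_conj_map_ofReal (p : ℝ[X]) :
    (p.map (algebraMap ℝ ℂ)).map (starRingEnd ℂ) = p.map (algebraMap ℝ ℂ) := by
  rw [Polynomial.map_map]
  congr 1
  exact RingHom.ext Complex.conj_ofReal

theorem Polynomial.eq_of_eval_div_pow_eq {K : Type*} [Field K] [Infinite K] {Q G : K[X]} {a b : ℕ}
    (hQ : Q.coeff 0 ≠ 0) (hG : G.coeff 0 ≠ 0)
    (h : ∀ w ≠ 0, Q.eval w / w ^ a = G.eval w / w ^ b) : a = b ∧ Q = G := by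
  have hpoly : Q * X ^ b = G * X ^ a := by
    refine eq_of_infinite_eval_eq _ _ (Set.Infinite.mono (s := {0}ᶜ) (fun w (hw : w ≠ 0) => ?_)
      (Set.finite_singleton 0).infinite_compl)
    have := h w hw
    rw [div_eq_div_iff (pow_ne_zero _ hw) (pow_ne_zero _ hw)] at this
    simpa using this
  have hab : a = b := by
    have := congrArg natTrailingDegree hpoly
    rwa [natTrailingDegree_mul_X_pow (fun h => hQ (by simp [h])),
      natTrailingDegree_mul_X_pow (fun h => hG (by simp [h])),
      natTrailingDegree_eq_zero.mpr (Or.inr hQ), natTrailingDegree_eq_zero.mpr (Or.inr hG),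
      zero_add, zero_add, eq_comm] at this
  subst hab
  exact ⟨rfl, mul_right_cancel₀ (pow_ne_zero _ X_ne_zero) hpoly⟩

/-- **Blocking invariance of the topological invariant.**
Let `g` be a real Laurent polynomial, represented as `g z = p(z)/z^Np` with
`p.coeff 0 ≠ 0`.  For `N ≥ 1` and `ζ = e^{2πi/N}`, the product `Π_{n<N} g(ζⁿ z)` is a
Laurent polynomial in `z^N`: there is a real Laurent polynomial `f`, represented as
`f Z = q(Z)/Z^Nq` with `q.coeff 0 ≠ 0`, such that `f(z^N) = Π_{n<N} g(ζⁿ z)` for all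
`z ≠ 0`; moreover any such `f` has the same invariant: `ω(f) = ω(g)`. -/
theorem stmt4 (N : ℕ) (hN : 0 < N) (p : Polynomial ℝ) (Np : ℕ) (hp0 : p.coeff 0 ≠ 0) :
    (∃ (q : Polynomial ℝ) (Nq : ℕ), q.coeff 0 ≠ 0 ∧
      (∀ z : ℂ, z ≠ 0 →
        (q.map (algebraMap ℝ ℂ)).eval (z ^ N) / (z ^ N) ^ Nq
          = ∏ n ∈ Finset.range N,
              ((p.map (algebraMap ℝ ℂ)).eval (Complex.exp (2 * Real.pi * Complex.I * n / N) * z)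
                / (Complex.exp (2 * Real.pi * Complex.I * n / N) * z) ^ Np))) ∧
    (∀ (q : Polynomial ℝ) (Nq : ℕ), q.coeff 0 ≠ 0 →
      (∀ z : ℂ, z ≠ 0 →
        (q.map (algebraMap ℝ ℂ)).eval (z ^ N) / (z ^ N) ^ Nq
          = ∏ n ∈ Finset.range N,
              ((p.map (algebraMap ℝ ℂ)).eval (Complex.exp (2 * Real.pi * Complex.I * n / N) * z)
                / (Complex.exp (2 * Real.pi * Complex.I * n / N) * z) ^ Np)) →
      ((((q.map (algebraMap ℝ ℂ)).roots.filter (fun z => ‖z‖ < 1)).card : ℤ) - (Nq : ℤ))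
        = ((((p.map (algebraMap ℝ ℂ)).roots.filter (fun z => ‖z‖ < 1)).card : ℤ) - (Np : ℤ))) := by
  set P : ℂ[X] := p.map (algebraMap ℝ ℂ)
  have hζ := Complex.isPrimitiveRoot_exp N hN.ne'
  have hexp (n : ℕ) : exp (2 * Real.pi * I * n / N) = exp (2 * Real.pi * I / N) ^ n := by
    rw [← exp_nat_mul]; ring_nf
  set G : ℂ[X] := C ((-1) ^ ((N + 1) * Np)) * blockPoly N P
  have hG (z : ℂ) : ∏ n ∈ Finset.range N, P.eval (exp (2 * Real.pi * I * n / N) * z)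
      / (exp (2 * Real.pi * I * n / N) * z) ^ Np = G.eval (z ^ N) / (z ^ N) ^ Np := by
    simp only [hexp, prod_eval_div_pow_eq_eval_blockPoly hζ hN (IsAlgClosed.splits P), G]
  have hP0 : P.coeff 0 ≠ 0 := by simpa [P, coeff_map] using hp0
  have hG0 : G.coeff 0 ≠ 0 := by
    rw [coeff_C_mul, coeff_zero_blockPoly hζ hN (IsAlgClosed.splits P)]
    exact mul_ne_zero (by simp) (pow_ne_zero _ hP0)
  refine ⟨?_, fun q Nq hq0 hq => ?_⟩
  · have hGreal : G.map (starRingEnd ℂ) = G := by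
      rw [Polynomial.map_mul, map_C, map_blockPoly (IsAlgClosed.splits P), map_conj_map_ofReal]
      simp [G, P]
    obtain ⟨q, hq⟩ := exists_map_ofReal_eq_of_map_conj_eq hGreal
    refine ⟨q, Np, ?_, fun z _ => by rw [hq, hG]⟩
    simpa [← hq, coeff_map] using hG0
  · have hQ0 : (q.map (algebraMap ℝ ℂ)).coeff 0 ≠ 0 := by simpa [coeff_map] using hq0
    obtain ⟨rfl, hQG⟩ := eq_of_eval_div_pow_eq hQ0 hG0 fun w hw => by
      obtain ⟨z, rfl⟩ := IsAlgClosed.exists_pow_nat_eq w hN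
      rw [hq z (by rintro rfl; simp [zero_pow hN.ne'] at hw), hG]
    have hP : P ≠ 0 := fun h => hP0 (by simp [h])
    rw [hQG, roots_C_mul _ (by simp), roots_blockPoly hP,
      Multiset.card_filter_norm_lt_one_map_pow _ hN.ne']
end

section
/- Let z̃_1, ..., z̃_{N_p} be distinct nonzero complex numbers and t_{-1}, ..., t_{-N_p} ∈ ℂ with t_{-N_p} ≠ 0. Define the N_p × N_p matrix A by A_{ns} = −Σ_{a=n}^{N_p} t_{−a} z̃_s^{n−a}, for 1 ≤ n, s ≤ N_p. Then A is invertible. -/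
/-- **Invertibility of the boundary-constraint matrix.** For distinct nonzero
`z̃_1, …, z̃_{Np} ∈ ℂ` and coefficients `t_{-1}, …, t_{-Np}` with `t_{-Np} ≠ 0`, the
matrix `A_{ns} = −Σ_{a=n}^{Np} t_{−a} z̃_s^{n−a}` (indices `1 ≤ n, s ≤ Np`) is
invertible. -/
theorem stmt8 (Np : ℕ) (hNp : 0 < Np)
    (zt : Fin Np → ℂ) (hz : ∀ s, zt s ≠ 0) (hinj : Function.Injective zt)
    (t : ℤ → ℂ) (ht : t (-(Np : ℤ)) ≠ 0)
    (A : Matrix (Fin Np) (Fin Np) ℂ)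
    (hA : ∀ n s : Fin Np, A n s
      = -∑ a ∈ Finset.Icc (n.val + 1) Np, t (-(a : ℤ)) * zt s ^ ((n.val : ℤ) + 1 - (a : ℤ))) :
    IsUnit A := by
  classical
  set w : Fin Np → ℂ := fun s => (zt s)⁻¹ with hw
  have hwinj : Function.Injective w := fun a b h => hinj (inv_injective h)
  set C : Matrix (Fin Np) (Fin Np) ℂ :=
    Matrix.of (fun n m : Fin Np => if n ≤ m then -t ((m.val : ℤ) - n.val - Np) else 0) with hC
  set V : Matrix (Fin Np) (Fin Np) ℂ :=
    ((Matrix.vandermonde w).transpose).submatrix Fin.revPerm id with hV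
  have hAeq : A = C * V := by
    ext n s
    rw [hA, Matrix.mul_apply]
    simp only [hC, hV, Matrix.of_apply, Matrix.submatrix_apply, Matrix.transpose_apply,
      Matrix.vandermonde_apply, ite_mul, zero_mul, Fin.revPerm_apply, id_eq]
    rw [Finset.sum_ite, Finset.sum_const_zero, add_zero]
    simp only [neg_mul, Finset.sum_neg_distrib]
    congr 1
    refine Finset.sum_nbij' (i := fun a => ⟨(Np + n.val - a) % Np, Nat.mod_lt _ hNp⟩)
      (j := fun m => Np + n.val - m.val) ?_ ?_ ?_ ?_ ?_
    · intro a ha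
      simp only [Finset.mem_Icc] at ha
      refine Finset.mem_filter.mpr ⟨Finset.mem_univ _, ?_⟩
      rw [Fin.le_def]
      show n.val ≤ (Np + n.val - a) % Np
      rw [Nat.mod_eq_of_lt (by omega)]
      omega
    · intro m hm
      simp only [Finset.mem_filter, Finset.mem_univ, true_and, Fin.le_def] at hm
      simp only [Finset.mem_Icc]
      omega
    · intro a ha
      simp only [Finset.mem_Icc] at ha
      show Np + n.val - (Np + n.val - a) % Np = a
      rw [Nat.mod_eq_of_lt (by omega)]
      omega
    · intro m hm
      simp only [Finset.mem_filter, Finset.mem_univ, true_and, Fin.le_def] at hm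
      ext
      show (Np + n.val - (Np + n.val - m.val)) % Np = m.val
      rw [Nat.mod_eq_of_lt (by omega)]
      omega
    · intro a ha
      simp only [Finset.mem_Icc] at ha
      have hmod : (Np + n.val - a) % Np = Np + n.val - a := Nat.mod_eq_of_lt (by omega)
      have h1 : (((Np + n.val - a) % Np : ℕ) : ℤ) - n.val - Np = -(a : ℤ) := by
        rw [hmod]
        push_cast [Nat.cast_sub (by omega : a ≤ Np + n.val)]; ring
      have h2 : (Fin.rev ⟨(Np + n.val - a) % Np, Nat.mod_lt _ hNp⟩ : Fin Np).val
          = a - (n.val + 1) := by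
        simp [Fin.rev, hmod]; omega
      rw [h1, h2]
      congr 1
      have : ((n.val : ℤ) + 1 - a) = -((a - (n.val + 1) : ℕ) : ℤ) := by
        push_cast [Nat.cast_sub (by omega : n.val + 1 ≤ a)]; ring
      rw [this, zpow_neg, zpow_natCast, hw, inv_pow]
  have hdetC : C.det ≠ 0 := by
    have htri : C.BlockTriangular id := by
      intro i j hij
      show (if i ≤ j then -t ((j.val : ℤ) - i.val - Np) else 0) = 0
      rw [if_neg (show ¬ i ≤ j from not_le.mpr hij)]
    rw [Matrix.det_of_upperTriangular htri]
    have : ∀ i : Fin Np, C i i = -t (-(Np : ℤ)) := by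
      intro i
      simp only [hC, Matrix.of_apply, if_pos le_rfl]
      ring_nf
    rw [Finset.prod_congr rfl (fun i _ => this i)]
    simp [ht]
  have hdetV : V.det ≠ 0 := by
    rw [hV, Matrix.det_permute, Matrix.det_transpose]
    refine mul_ne_zero ?_ ?_
    · rcases Int.units_eq_one_or (Equiv.Perm.sign (Fin.revPerm (n := Np))) with h | h <;>
        rw [h] <;> norm_num
    rw [Matrix.det_vandermonde_ne_zero_iff]
    exact hwinj
  rw [hAeq, Matrix.isUnit_iff_isUnit_det, Matrix.det_mul]
  exact (mul_ne_zero hdetC hdetV).isUnit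
end

section
/- Let f(z) = t_2 z² + t_1 z + t_0 with t_0, t_1, t_2 > 0, and set τ_0 = t_0/t_2, τ_1 = t_1/t_2. Then f has at least one root on the unit circle if and only if (τ_0 = 1 and τ_1 ≤ 2) or (τ_1 = τ_0 + 1). -/
open Complex

/-! On the unit circle `z² = 2 Re z · z - 1`, so `a z² + b z + c = 0` becomes the linear relation
`(b + 2a Re z) z + (c - a) = 0` with real coefficients. Either `z` is real, hence `z = ±1`, or both
coefficients vanish: `c = a` and `b = -2a Re z` with `|Re z| ≤ 1`. Conversely every `x ∈ [-1, 1]` is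
the real part of a point of the unit circle, which is then a root of `z² - 2 x z + 1`. -/

theorem Complex.sq_sub_two_re_mul_add_normSq (z : ℂ) : z ^ 2 - 2 * z.re * z + normSq z = 0 := by
  apply Complex.ext <;> simp [sq, normSq_apply] <;> ring

theorem Complex.sq_sub_two_re_mul_add_one_of_norm_eq_one {z : ℂ} (hz : ‖z‖ = 1) :
    z ^ 2 - 2 * z.re * z + 1 = 0 := by
  simpa [normSq_eq_norm_sq, hz] using z.sq_sub_two_re_mul_add_normSq

theorem Complex.exists_norm_eq_one_re_eq {x : ℝ} (hx : |x| ≤ 1) : ∃ z : ℂ, ‖z‖ = 1 ∧ z.re = x := by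
  obtain ⟨hx₁, hx₂⟩ := abs_le.mp hx
  exact ⟨exp (Real.arccos x * I), norm_exp_ofReal_mul_I _, by
    rw [exp_ofReal_mul_I_re, Real.cos_arccos hx₁ hx₂]⟩

theorem exists_norm_eq_one_quadratic_eq_zero_iff (a b c : ℝ) :
    (∃ z : ℂ, ‖z‖ = 1 ∧ (a : ℂ) * z ^ 2 + (b : ℂ) * z + (c : ℂ) = 0) ↔
      ((c = a ∧ |b| ≤ 2 * |a|) ∨ a - b + c = 0 ∨ a + b + c = 0) := by
  constructor
  · rintro ⟨z, hz, hroot⟩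
    have hlin : ((b + 2 * a * z.re : ℝ) : ℂ) * z + ((c - a : ℝ) : ℂ) = 0 := by
      push_cast
      linear_combination hroot - a * sq_sub_two_re_mul_add_one_of_norm_eq_one hz
    have him : (b + 2 * a * z.re) * z.im = 0 := by
      simpa using congrArg Complex.im hlin
    rcases mul_eq_zero.mp him with hcoeff | hreal
    · left
      rw [hcoeff, ofReal_zero, zero_mul, zero_add, ofReal_eq_zero, sub_eq_zero] at hlin
      refine ⟨hlin, ?_⟩
      calc |b| = 2 * |a| * |z.re| := by
            rw [eq_neg_of_add_eq_zero_left hcoeff, abs_neg, abs_mul, abs_mul, abs_two]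
        _ ≤ 2 * |a| * 1 := by gcongr; exact hz ▸ abs_re_le_norm z
        _ = 2 * |a| := mul_one _
    · right
      have hz_real : z = (z.re : ℂ) := Complex.ext rfl (by simpa using hreal)
      rw [hz_real, norm_real, Real.norm_eq_abs] at hz
      rw [hz_real] at hroot
      rcases abs_eq (zero_le_one' ℝ) |>.mp hz with hre | hre
      · right; exact_mod_cast (by simpa [hre] using hroot : (a : ℂ) + b + c = 0)
      · left; exact_mod_cast (by simpa [hre, sub_eq_add_neg] using hroot : (a : ℂ) - b + c = 0)
  · rintro (⟨rfl, hb⟩ | hminus | hplus)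
    · obtain ⟨x, hx, hbx⟩ : ∃ x : ℝ, |x| ≤ 1 ∧ b = -2 * c * x := by
        rcases eq_or_ne c 0 with rfl | hc
        · exact ⟨0, by simp, by simpa using hb⟩
        · refine ⟨-b / (2 * c), ?_, by field_simp⟩
          rw [abs_div, abs_neg, abs_mul, abs_two, div_le_one (by positivity)]
          exact hb
      obtain ⟨z, hz, rfl⟩ := exists_norm_eq_one_re_eq hx
      refine ⟨z, hz, ?_⟩
      rw [hbx]
      push_cast
      linear_combination (c : ℂ) * sq_sub_two_re_mul_add_one_of_norm_eq_one hz
    · exact ⟨-1, by simp, by exact_mod_cast (by linear_combination hminus : a * (-1) ^ 2 + b * (-1) + c = 0)⟩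
    · exact ⟨1, by simp, by exact_mod_cast (by linear_combination hplus : a * 1 ^ 2 + b * 1 + c = 0)⟩

/-- **Critical lines of the quadratic model.** For `f(z) = t₂ z² + t₁ z + t₀` with
`t₀, t₁, t₂ > 0` and `τ₀ = t₀/t₂`, `τ₁ = t₁/t₂`, `f` has a root on the unit circle
if and only if (`τ₀ = 1` and `τ₁ ≤ 2`) or `τ₁ = τ₀ + 1`. -/
theorem stmt12 (t0 t1 t2 : ℝ) (h0 : 0 < t0) (h1 : 0 < t1) (h2 : 0 < t2) :
    (∃ z : ℂ, ‖z‖ = 1 ∧ (t2 : ℂ) * z ^ 2 + (t1 : ℂ) * z + (t0 : ℂ) = 0)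
      ↔ ((t0 / t2 = 1 ∧ t1 / t2 ≤ 2) ∨ t1 / t2 = t0 / t2 + 1) := by
  rw [exists_norm_eq_one_quadratic_eq_zero_iff, abs_of_pos h1, abs_of_pos h2,
    div_eq_one_iff_eq h2.ne', div_le_iff₀ h2, div_add_one h2.ne', div_left_inj' h2.ne']
  have hsum : t2 + t1 + t0 ≠ 0 := by positivity
  constructor
  · rintro (⟨h, hle⟩ | h | h)
    · exact Or.inl ⟨h, by linarith⟩
    · exact Or.inr (by linarith)
    · exact absurd h hsum
  · rintro (⟨h, hle⟩ | h)
    · exact Or.inl ⟨h, by linarith⟩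
    · exact Or.inr (Or.inl (by linarith))
end

section
/- Let γ_1, γ_2, γ_3, γ_4 be Hermitian operators satisfying γ_i² = 1 and γ_i γ_j = −γ_j γ_i for i ≠ j (Majorana operators). Define U(α) = exp((α/2) γ_2 γ_4) exp((α/4)(γ_1 γ_2 + γ_3 γ_4)). Then U(π) = ½(γ_2 − γ_1)(γ_4 − γ_3), U(π) is unitary, and conjugation by U(π) swaps γ_1 ↔ γ_2 and γ_3 ↔ γ_4: U(π) γ_1 U(π)† = γ_2, U(π) γ_2 U(π)† = γ_1, U(π) γ_3 U(π)† = γ_4, U(π) γ_4 U(π)† = γ_3. -/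
open NormedSpace

/-!
Since `(γ i * γ j)² = -1` for `i ≠ j`, `z ↦ Re z + Im z • γ i γ j` embeds `ℂ` into the algebra,
so `exp (t • γ i γ j) = cos t + sin t • γ i γ j`. As `γ 0 γ 1` and `γ 2 γ 3` commute, `U` becomes
`γ 1 γ 3 • ½ (1 + γ 0 γ 1)(1 + γ 2 γ 3)`, which collapses to `½ V W` with `V = γ 1 - γ 0` and
`W = γ 3 - γ 2`. Both are self-adjoint with `V² = W² = 2`, whence `U U† = U† U = 1`. Finally
`V γ 0 = -γ 1 V`, `V γ 1 = -γ 0 V`, and `V` anticommutes with `γ 2`, `γ 3` (symmetrically for `W`),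
so `U γ 0 = γ 1 U` and so on: conjugation by `U` swaps the two pairs.
-/

def AntiCommute {R : Type*} [Mul R] [Neg R] (a b : R) : Prop := a * b = -(b * a)

namespace AntiCommute

variable {R : Type*} [Ring R] {a b c d : R}

theorem symm (h : AntiCommute a b) : AntiCommute b a := by
  rw [AntiCommute, h, neg_neg]

theorem sub_left (ha : AntiCommute a c) (hb : AntiCommute b c) : AntiCommute (a - b) c := by
  rw [AntiCommute, sub_mul, mul_sub, ha, hb, neg_sub_neg, neg_sub]

theorem commute_mul_left (ha : AntiCommute a c) (hb : AntiCommute b c) : Commute (a * b) c := by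
  rw [Commute, SemiconjBy, mul_assoc, hb, mul_neg, ← mul_assoc, ha, neg_mul, neg_neg, mul_assoc]

theorem mul_self_mul_self (h : AntiCommute a b) (ha : a * a = 1) (hb : b * b = 1) :
    a * b * (a * b) = -1 := by
  rw [mul_assoc, ← mul_assoc b, h.symm, neg_mul, mul_neg, mul_assoc, hb, mul_one, ha]

theorem sub_mul_self (h : AntiCommute a b) (ha : a * a = 1) (hb : b * b = 1) :
    (b - a) * (b - a) = 2 := by
  rw [sub_mul, mul_sub, mul_sub, ha, hb, h, ← one_add_one_eq_two]
  abel

theorem mul_one_add_mul (h : AntiCommute a b) (hb : b * b = 1) : b * (1 + a * b) = b - a := by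
  rw [mul_add, mul_one, ← mul_assoc, h.symm, neg_mul, mul_assoc, hb, mul_one, sub_eq_add_neg]

theorem mul_mul_one_add_mul_one_add (hab : AntiCommute a b) (hac : AntiCommute a c)
    (hbc : AntiCommute b c) (hdc : AntiCommute d c) (hb : b * b = 1) (hc : c * c = 1) :
    b * c * ((1 + a * b) * (1 + d * c)) = (b - a) * (c - d) := by
  have hcomm : Commute c (1 + a * b) :=
    (Commute.one_right c).add_right (hac.commute_mul_left hbc).symm
  rw [← hab.mul_one_add_mul hb, ← hdc.mul_one_add_mul hc, mul_assoc b, ← mul_assoc c, hcomm.eq]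
  simp only [mul_assoc]

end AntiCommute

theorem sub_mul_left_of_mul_self_eq {R : Type*} [Ring R] {a b : R} (h : a * a = b * b) :
    (b - a) * a = -(b * (b - a)) := by
  rw [sub_mul, mul_sub, h, neg_sub]

theorem sub_mul_right_of_mul_self_eq {R : Type*} [Ring R] {a b : R} (h : a * a = b * b) :
    (b - a) * b = -(a * (b - a)) := by
  rw [sub_mul, mul_sub, h, neg_sub]

theorem smul_mul_mul_eq_mul_smul_mul {𝕜 A : Type*} [CommSemiring 𝕜] [Ring A] [Algebra 𝕜 A]
    {V W x y z : A} (c : 𝕜) (hx : W * x = -(z * W)) (hz : V * z = -(y * V)) :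
    c • (V * W) * x = y * (c • (V * W)) := by
  rw [smul_mul_assoc, mul_smul_comm, mul_assoc, hx, mul_neg, ← mul_assoc, hz, neg_mul, neg_neg,
    mul_assoc]

theorem inv_two_smul_mul_inv_two_smul_eq_one {𝕜 A : Type*} [Field 𝕜] [NeZero (2 : 𝕜)] [Ring A]
    [Algebra 𝕜 A] {V W : A} (hV : V * V = 2) (hW : W * W = 2) :
    (2⁻¹ : 𝕜) • (V * W) * ((2⁻¹ : 𝕜) • (W * V)) = 1 := by
  have : V * W * (W * V) = (2 * 2 : 𝕜) • 1 := by
    rw [mul_assoc, ← mul_assoc W, hW, ← mul_assoc, ← Nat.cast_ofNat (R := A) (n := 2),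
      ← Nat.cast_comm, mul_assoc, hV]
    simp [mul_smul, ofNat_smul_eq_nsmul]
  rw [smul_mul_smul_comm, this, smul_smul, mul_mul_mul_comm, inv_mul_cancel₀ two_ne_zero,
    mul_one, one_smul]

section Rotation

variable {A : Type*} [NormedRing A] [NormedAlgebra ℝ A] {x y : A}

theorem mem_eball_expSeries_radius (z : A) : z ∈ Metric.eball (0 : A) (expSeries ℝ A).radius :=
  (expSeries_radius_eq_top ℝ A).symm ▸ edist_lt_top _ _

theorem exp_smul_of_mul_self_eq_neg_one (hx : x * x = -1) (t : ℝ) :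
    exp (t • x) = Real.cos t • (1 : A) + Real.sin t • x := by
  let f := Complex.liftAux x hx
  have hf : Continuous f := f.toLinearMap.continuous_of_finiteDimensional
  have := map_exp_of_mem_ball (𝕂 := ℝ) f hf (t * Complex.I) (mem_eball_expSeries_radius _)
  rw [← Complex.exp_eq_exp_ℂ, Complex.exp_mul_I] at this
  simpa [f, Complex.liftAux_apply, Algebra.algebraMap_eq_smul_one, Complex.cos_ofReal_re,
    Complex.sin_ofReal_re] using this.symm

theorem exp_pi_div_two_smul_of_mul_self_eq_neg_one (hx : x * x = -1) :
    exp ((Real.pi / 2) • x) = x := by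
  simp [exp_smul_of_mul_self_eq_neg_one hx]

theorem exp_pi_div_four_smul_add [CompleteSpace A] (hx : x * x = -1) (hy : y * y = -1)
    (hxy : Commute x y) :
    exp ((Real.pi / 4) • (x + y)) = (2⁻¹ : ℝ) • ((1 + x) * (1 + y)) := by
  have half : Real.sqrt 2 / 2 * (Real.sqrt 2 / 2) = 2⁻¹ := by
    rw [div_mul_div_comm, Real.mul_self_sqrt zero_le_two]; norm_num
  rw [smul_add, exp_add_of_commute_of_mem_ball (𝕂 := ℝ) ((hxy.smul_left _).smul_right _)
      (mem_eball_expSeries_radius _) (mem_eball_expSeries_radius _),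
    exp_smul_of_mul_self_eq_neg_one hx, exp_smul_of_mul_self_eq_neg_one hy, Real.cos_pi_div_four,
    Real.sin_pi_div_four, ← smul_add, ← smul_add, smul_mul_smul_comm, half]

end Rotation

theorem exp_pi_div_two_smul_mul_exp_pi_div_four_smul {A : Type*} [NormedRing A]
    [NormedAlgebra ℝ A] [CompleteSpace A] (γ : Fin 4 → A) (hsq : ∀ i, γ i * γ i = 1)
    (hanti : ∀ i j, i ≠ j → AntiCommute (γ i) (γ j)) :
    exp ((Real.pi / 2) • (γ 1 * γ 3)) * exp ((Real.pi / 4) • (γ 0 * γ 1 + γ 2 * γ 3)) =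
      (2⁻¹ : ℝ) • ((γ 1 - γ 0) * (γ 3 - γ 2)) := by
  have hrot : ∀ i j, i ≠ j → γ i * γ j * (γ i * γ j) = -1 := fun i j hij =>
    (hanti i j hij).mul_self_mul_self (hsq i) (hsq j)
  have hcomm : Commute (γ 0 * γ 1) (γ 2 * γ 3) :=
    ((hanti 0 2 (by decide)).commute_mul_left (hanti 1 2 (by decide))).mul_right
      ((hanti 0 3 (by decide)).commute_mul_left (hanti 1 3 (by decide)))
  rw [exp_pi_div_two_smul_of_mul_self_eq_neg_one (hrot 1 3 (by decide)),
    exp_pi_div_four_smul_add (hrot 0 1 (by decide)) (hrot 2 3 (by decide)) hcomm, mul_smul_comm,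
    (hanti 0 1 (by decide)).mul_mul_one_add_mul_one_add (hanti 0 3 (by decide))
      (hanti 1 3 (by decide)) (hanti 2 3 (by decide)) (hsq 1) (hsq 3)]

/-- **Smoothly swapping two pairs of Majorana modes.** For Majorana operators
`γ₁, γ₂, γ₃, γ₄` (Hermitian, squaring to 1, mutually anticommuting) in a complex
normed ⋆-algebra, the unitary
`U(π) = exp((π/2) γ₂γ₄) · exp((π/4)(γ₁γ₂ + γ₃γ₄))` equals `½(γ₂−γ₁)(γ₄−γ₃)`, is
unitary, and conjugation by it swaps `γ₁ ↔ γ₂` and `γ₃ ↔ γ₄`. -/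
theorem stmt15 {A : Type*} [NormedRing A] [NormedAlgebra ℂ A] [CompleteSpace A]
    [StarRing A]
    (γ : Fin 4 → A)
    (hherm : ∀ i, star (γ i) = γ i)
    (hsq : ∀ i, γ i * γ i = 1)
    (hanti : ∀ i j, i ≠ j → γ i * γ j = -(γ j * γ i))
    (U : A)
    (hU : U = exp (((Real.pi / 2 : ℝ) : ℂ) • (γ 1 * γ 3))
      * exp (((Real.pi / 4 : ℝ) : ℂ) • (γ 0 * γ 1 + γ 2 * γ 3))) :
    U = ((2 : ℂ)⁻¹) • ((γ 1 - γ 0) * (γ 3 - γ 2)) ∧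
      U * star U = 1 ∧ star U * U = 1 ∧
      U * γ 0 * star U = γ 1 ∧ U * γ 1 * star U = γ 0 ∧
      U * γ 2 * star U = γ 3 ∧ U * γ 3 * star U = γ 2 := by
  have ac : ∀ i j, i ≠ j → AntiCommute (γ i) (γ j) := hanti
  have hsq' : ∀ i j, γ i * γ i = γ j * γ j := fun i j => (hsq i).trans (hsq j).symm
  have hU' : U = (2⁻¹ : ℂ) • ((γ 1 - γ 0) * (γ 3 - γ 2)) := by
    rw [hU, Complex.coe_smul, Complex.coe_smul,
      exp_pi_div_two_smul_mul_exp_pi_div_four_smul γ hsq ac, ← Complex.coe_smul,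
      Complex.ofReal_inv, Complex.ofReal_ofNat]
  have hUstar : star U = (2⁻¹ : ℂ) • ((γ 3 - γ 2) * (γ 1 - γ 0)) := by
    rw [hU', ← Nat.cast_ofNat, star_inv_natCast_smul, star_mul, star_sub, star_sub, hherm, hherm,
      hherm, hherm]
  have hV := (ac 0 1 (by decide)).sub_mul_self (hsq 0) (hsq 1)
  have hW := (ac 2 3 (by decide)).sub_mul_self (hsq 2) (hsq 3)
  have hUU : U * star U = 1 := by
    rw [hUstar, hU']
    exact inv_two_smul_mul_inv_two_smul_eq_one hV hW
  have conj : ∀ x y z, (γ 3 - γ 2) * x = -(z * (γ 3 - γ 2)) →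
      (γ 1 - γ 0) * z = -(y * (γ 1 - γ 0)) → U * x * star U = y := fun x y z hx hz => by
    rw [hU', smul_mul_mul_eq_mul_smul_mul _ hx hz, ← hU', mul_assoc, hUU, mul_one]
  refine ⟨hU', hUU, ?_, conj _ _ _ ?_ (sub_mul_left_of_mul_self_eq (hsq' 0 1)),
    conj _ _ _ ?_ (sub_mul_right_of_mul_self_eq (hsq' 0 1)),
    conj _ _ _ (sub_mul_left_of_mul_self_eq (hsq' 2 3)) ?_,
    conj _ _ _ (sub_mul_right_of_mul_self_eq (hsq' 2 3)) ?_⟩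
  · rw [hUstar, hU']
    exact inv_two_smul_mul_inv_two_smul_eq_one hW hV
  · exact (ac 3 0 (by decide)).sub_left (ac 2 0 (by decide))
  · exact (ac 3 1 (by decide)).sub_left (ac 2 1 (by decide))
  · exact (ac 1 3 (by decide)).sub_left (ac 0 3 (by decide))
  · exact (ac 1 2 (by decide)).sub_left (ac 0 2 (by decide))
end

section
/- Let f, g be finite Laurent polynomials with real coefficients, nonzero leading and trailing coefficients, and no zeros on the unit circle, such that the winding numbers of k ↦ f(e^{ik}) and k ↦ g(e^{ik}) around the origin differ: w(f) ≠ w(g). Then for any continuous path t ↦ h_t (t ∈ [0,1]) of real Laurent polynomials of uniformly bounded degree with h_0 = f and h_1 = g, there exists t* ∈ [0,1] such that h_{t*} has a zero on the unit circle. -/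
/-! If `h` has no zeros on a circle, then `θ ↦ h(c + R e^{iθ}) · exp(-∫₀^θ h'/h)` has zero
derivative, so `exp` of the full winding integral is `1` and the winding number is an integer.
Along a path of Laurent polynomials without zeros on the circle the winding number is continuous
in the parameter, hence constant on the connected interval `[0,1]`. -/

open Complex Set Metric Function
open scoped Real

theorem exists_intervalIntegral_div_eq_intCast_mul {g g' : ℝ → ℂ} {a b : ℝ}
    (hg : ∀ x, HasDerivAt g (g' x) x) (hg' : Continuous g') (hne : ∀ x, g x ≠ 0)
    (hab : g a = g b) :
    ∃ n : ℤ, ∫ x in a..b, g' x / g x = n * (2 * π * I) := by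
  have hcont : Continuous fun x => g' x / g x :=
    hg'.div (continuous_iff_continuousAt.2 fun x => (hg x).continuousAt) hne
  set q : ℝ → ℂ := fun y => ∫ x in a..y, g' x / g x
  have hq : ∀ y, HasDerivAt q (g' y / g y) y := fun y =>
    (hcont.integral_hasStrictDerivAt a y).hasDerivAt
  have hconst : ∀ y, HasDerivAt (fun y => g y * Complex.exp (-q y)) 0 y := by
    intro y
    refine ((hg y).mul (hq y).neg.cexp).congr_deriv ?_
    field_simp [hne y]
    ring
  have hab' : g b * Complex.exp (-q b) = g a * Complex.exp (-q a) :=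
    is_const_of_deriv_eq_zero (fun y => (hconst y).differentiableAt)
      (fun y => (hconst y).deriv) b a
  have hexp : Complex.exp (-q b) = 1 := by
    have hqa : q a = 0 := intervalIntegral.integral_same
    rw [hqa, neg_zero, Complex.exp_zero, mul_one, hab] at hab'
    exact mul_left_cancel₀ (hne b) (hab'.trans (mul_one _).symm)
  obtain ⟨n, hn⟩ := Complex.exp_eq_one_iff.1 hexp
  exact ⟨-n, by push_cast; linear_combination -hn⟩

theorem exists_circleIntegral_deriv_div_eq_intCast_mul {f : ℂ → ℂ} {c : ℂ} {R : ℝ}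
    (hf : ∀ z ∈ sphere c |R|, DifferentiableAt ℂ f z)
    (hf' : ContinuousOn (deriv f) (sphere c |R|)) (hne : ∀ z ∈ sphere c |R|, f z ≠ 0) :
    ∃ n : ℤ, (∮ z in C(c, R), deriv f z / f z) = n * (2 * π * I) := by
  have hmem := circleMap_mem_sphere' c R
  have hg : ∀ θ, HasDerivAt (f ∘ circleMap c R)
      (circleMap 0 R θ * I * deriv f (circleMap c R θ)) θ := fun θ => by
    rw [mul_comm]
    exact (hf _ (hmem θ)).hasDerivAt.comp θ (hasDerivAt_circleMap c R θ)
  obtain ⟨n, hn⟩ := exists_intervalIntegral_div_eq_intCast_mul hg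
    (((continuous_circleMap 0 R).mul continuous_const).mul
      (hf'.comp_continuous (continuous_circleMap c R) hmem))
    (fun θ => hne _ (hmem θ)) (congrArg f (periodic_circleMap c R).eq.symm)
  refine ⟨n, Eq.trans ?_ hn⟩
  simp only [circleIntegral, deriv_circleMap, comp_apply, smul_eq_mul, mul_div_assoc]

noncomputable def circleWindingNumber (f : ℂ → ℂ) (c : ℂ) (R : ℝ) : ℂ :=
  (2 * π * I)⁻¹ * ∮ z in C(c, R), deriv f z / f z

theorem circleWindingNumber_mem_range_intCast {f : ℂ → ℂ} {c : ℂ} {R : ℝ}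
    (hf : ∀ z ∈ sphere c |R|, DifferentiableAt ℂ f z)
    (hf' : ContinuousOn (deriv f) (sphere c |R|)) (hne : ∀ z ∈ sphere c |R|, f z ≠ 0) :
    circleWindingNumber f c R ∈ range ((↑) : ℤ → ℂ) := by
  obtain ⟨n, hn⟩ := exists_circleIntegral_deriv_div_eq_intCast_mul hf hf' hne
  refine ⟨n, ?_⟩
  rw [circleWindingNumber, hn]
  field_simp [two_pi_I_ne_zero]

theorem continuousOn_parametric_circleIntegral {X E : Type*} [TopologicalSpace X]
    [NormedAddCommGroup E] [NormedSpace ℂ E] {G : X → ℂ → E} {S : Set X} {c : ℂ} {R : ℝ}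
    (hG : ContinuousOn (uncurry G) (S ×ˢ sphere c |R|)) :
    ContinuousOn (fun x => ∮ z in C(c, R), G x z) S := by
  rw [continuousOn_iff_continuous_domRestrict]
  refine intervalIntegral.continuous_parametric_intervalIntegral_of_continuous' ?_ 0 (2 * π)
  simp only [deriv_circleMap]
  exact (((continuous_circleMap 0 R).mul continuous_const).comp continuous_snd).smul
    (hG.comp_continuous (continuous_subtype_val.prodMap (continuous_circleMap c R))
      fun p => ⟨p.1.2, circleMap_mem_sphere' c R p.2⟩)

section LaurentSum

variable (s : Finset ℤ)

theorem hasDerivAt_sum_mul_zpow (a : ℤ → ℂ) {z : ℂ} (hz : z ≠ 0) :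
    HasDerivAt (fun z => ∑ α ∈ s, a α * z ^ α) (∑ α ∈ s, a α * α * z ^ (α - 1)) z := by
  simp only [mul_assoc]
  exact HasDerivAt.fun_sum fun α _ => (hasDerivAt_zpow α z (Or.inl hz)).const_mul (a α)

theorem continuousOn_sum_mul_zpow {X : Type*} [TopologicalSpace X] {a : X → ℤ → ℂ}
    (ha : ∀ α ∈ s, Continuous fun x => a x α) (e : ℤ → ℤ) :
    ContinuousOn (fun p : X × ℂ => ∑ α ∈ s, a p.1 α * p.2 ^ e α) {p | p.2 ≠ 0} :=
  continuousOn_finsetSum _ fun α hα =>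
    ((ha α hα).comp continuous_fst).continuousOn.mul
      (continuous_snd.continuousOn.zpow₀ (e α) fun _ hp => Or.inl hp)

variable {s} {X : Type*} {F : X → ℂ → ℂ} {a : X → ℤ → ℂ}

theorem deriv_eq_sum_mul_zpow (hF : ∀ x z, F x z = ∑ α ∈ s, a x α * z ^ α) (x : X) {z : ℂ}
    (hz : z ≠ 0) : deriv (F x) z = ∑ α ∈ s, a x α * α * z ^ (α - 1) := by
  rw [funext (hF x)]
  exact (hasDerivAt_sum_mul_zpow s (a x) hz).deriv

variable [TopologicalSpace X]

theorem continuousOn_deriv_of_sum_mul_zpow (hF : ∀ x z, F x z = ∑ α ∈ s, a x α * z ^ α)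
    (ha : ∀ α ∈ s, Continuous fun x => a x α) :
    ContinuousOn (fun p : X × ℂ => deriv (F p.1) p.2) {p | p.2 ≠ 0} :=
  (continuousOn_sum_mul_zpow s (fun α hα => (ha α hα).mul continuous_const) (· - 1)).congr
    fun p hp => deriv_eq_sum_mul_zpow hF p.1 hp

theorem circleWindingNumber_mem_range_intCast_of_sum_mul_zpow
    (hF : ∀ x z, F x z = ∑ α ∈ s, a x α * z ^ α) (ha : ∀ α ∈ s, Continuous fun x => a x α)
    {x : X} {R : ℝ} (hR : R ≠ 0) (hne : ∀ z ∈ sphere 0 |R|, F x z ≠ 0) :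
    circleWindingNumber (F x) 0 R ∈ range ((↑) : ℤ → ℂ) := by
  have hR' : ∀ z ∈ sphere (0 : ℂ) |R|, z ≠ 0 :=
    fun _ hz => ne_of_mem_sphere hz (abs_ne_zero.2 hR)
  refine circleWindingNumber_mem_range_intCast (fun z hz => ?_) ?_ hne
  · rw [funext (hF x)]
    exact (hasDerivAt_sum_mul_zpow s (a x) (hR' z hz)).differentiableAt
  · exact (continuousOn_deriv_of_sum_mul_zpow hF ha).comp
      (Continuous.prodMk_right x).continuousOn hR'

theorem continuousOn_circleWindingNumber_of_sum_mul_zpow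
    (hF : ∀ x z, F x z = ∑ α ∈ s, a x α * z ^ α) (ha : ∀ α ∈ s, Continuous fun x => a x α)
    {S : Set X} {R : ℝ} (hR : R ≠ 0) (hne : ∀ x ∈ S, ∀ z ∈ sphere 0 |R|, F x z ≠ 0) :
    ContinuousOn (fun x => circleWindingNumber (F x) 0 R) S := by
  have hF' : ContinuousOn (uncurry F) {p | p.2 ≠ 0} :=
    (continuousOn_sum_mul_zpow s ha id).congr fun p _ => hF p.1 p.2
  have hsub : S ×ˢ sphere 0 |R| ⊆ {p : X × ℂ | p.2 ≠ 0} :=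
    fun _ hp => ne_of_mem_sphere hp.2 (abs_ne_zero.2 hR)
  refine continuousOn_const.mul (continuousOn_parametric_circleIntegral ?_)
  exact ((continuousOn_deriv_of_sum_mul_zpow hF ha).mono hsub).div (hF'.mono hsub)
    fun p hp => hne p.1 hp.1 p.2 hp.2

end LaurentSum

theorem stmt19_general (s : Finset ℤ) (t : ℝ → ℤ → ℝ)
    (htcont : ∀ α ∈ s, Continuous fun τ : ℝ => t τ α)
    (F : ℝ → ℂ → ℂ)
    (hF : ∀ (τ : ℝ) (z : ℂ), F τ z = ∑ α ∈ s, ((t τ α : ℝ) : ℂ) * z ^ α)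
    (hw : (2 * Real.pi * Complex.I)⁻¹ * (∮ z in C(0, 1), deriv (F 0) z / F 0 z)
        ≠ (2 * Real.pi * Complex.I)⁻¹ * (∮ z in C(0, 1), deriv (F 1) z / F 1 z)) :
    ∃ τ ∈ Set.Icc (0 : ℝ) 1, ∃ z : ℂ, ‖z‖ = 1 ∧ F τ z = 0 := by
  by_contra! hzero
  have hne : ∀ τ ∈ Icc (0 : ℝ) 1, ∀ z ∈ sphere (0 : ℂ) |1|, F τ z ≠ 0 :=
    fun τ hτ z hz => hzero τ hτ z (by simpa using hz)
  have hcoef : ∀ α ∈ s, Continuous fun τ => ((t τ α : ℝ) : ℂ) :=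
    fun α hα => continuous_ofReal.comp (htcont α hα)
  exact hw <| isPreconnected_Icc.constant_of_mapsTo
    isClosedEmbedding_intCast.isInducing.isDiscrete_range
    (continuousOn_circleWindingNumber_of_sum_mul_zpow hF hcoef one_ne_zero hne)
    (fun τ hτ => circleWindingNumber_mem_range_intCast_of_sum_mul_zpow hF hcoef one_ne_zero
      (hne τ hτ))
    (left_mem_Icc.2 zero_le_one) (right_mem_Icc.2 zero_le_one)

/-- **Different winding numbers force a gap closing along any path.**
Let `τ ↦ h_τ`, `h_τ(z) = Σ_{α∈s} t(τ,α) z^α`, be a path of real Laurent polynomials of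
uniformly bounded degree (fixed finite support `s`, coefficients continuous in `τ`).
Suppose the endpoints `h₀ = f` and `h₁ = g` have no zeros on the unit circle and their
winding numbers `w(h) = (2πi)⁻¹ ∮_{|z|=1} h'/h` around the origin differ.  Then some
`h_{τ*}`, `τ* ∈ [0,1]`, has a zero on the unit circle. -/
theorem stmt19 (s : Finset ℤ) (t : ℝ → ℤ → ℝ)
    (htcont : ∀ α ∈ s, Continuous fun τ : ℝ => t τ α)
    (F : ℝ → ℂ → ℂ)
    (hF : ∀ (τ : ℝ) (z : ℂ), F τ z = ∑ α ∈ s, ((t τ α : ℝ) : ℂ) * z ^ α)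
    (hf : ∀ z : ℂ, ‖z‖ = 1 → F 0 z ≠ 0)
    (hg : ∀ z : ℂ, ‖z‖ = 1 → F 1 z ≠ 0)
    (hw : (2 * Real.pi * Complex.I)⁻¹ * (∮ z in C(0, 1), deriv (F 0) z / F 0 z)
        ≠ (2 * Real.pi * Complex.I)⁻¹ * (∮ z in C(0, 1), deriv (F 1) z / F 1 z)) :
    ∃ τ ∈ Set.Icc (0 : ℝ) 1, ∃ z : ℂ, ‖z‖ = 1 ∧ F τ z = 0 :=
  stmt19_general s t htcont F hF hw
end
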